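/- Let b_n be a sequence of random variables with m²/n ≤ b_n ≤ 2m²/n almost surely, and suppose (τ_{n+1} − τ_n − b_n) is a martingale difference sequence with ∑_n b_n² < ∞. Then with c_n = ∑_{l=i}^{n} b_l we have (τ_n − τ_i)/c_n → 1 almost surely, and c_n = Θ(m² log n). -/

import Mathlib

/-!
The increments `X_n = τ_{n+1} - τ_n - b_n` form a martingale difference sequence with
`E X_n² ≤ E b_n² ≤ 4m⁴/n²`. Increments of a martingale are orthogonal, so
`S_n = ∑_{i ≤ l < n} X_l` is bounded in L² and converges almost surely. The normalisation
`c_n = ∑_{i ≤ l ≤ n} b_l` lies between `m² ∑ 1/l` and `2m² ∑ 1/l`, hence is of order `m² log n`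
and tends to infinity; since `τ_n - τ_i = c_n + S_n - b_n`, the ratio `(τ_n - τ_i)/c_n` tends
to `1`.
-/

open MeasureTheory ProbabilityTheory Filter Topology Finset Real

lemma sum_Icc_inv_le_one_add_log {i : ℕ} (hi : 1 ≤ i) (n : ℕ) :
    ∑ l ∈ Icc i n, (l : ℝ)⁻¹ ≤ 1 + log n :=
  calc ∑ l ∈ Icc i n, (l : ℝ)⁻¹ ≤ ∑ l ∈ Icc 1 n, (l : ℝ)⁻¹ :=
        sum_le_sum_of_subset_of_nonneg (Icc_subset_Icc_left hi) fun _ _ _ => by positivity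
    _ = harmonic n := by simp [harmonic_eq_sum_Icc]
    _ ≤ 1 + log n := harmonic_le_one_add_log n

lemma log_add_one_sub_log_le_sum_Icc_inv {i n : ℕ} (hi : 1 ≤ i) (hin : i ≤ n + 1) :
    log (n + 1) - log i ≤ ∑ l ∈ Icc i n, (l : ℝ)⁻¹ := by
  have hi' : (0 : ℝ) < i := by exact_mod_cast hi
  calc log (n + 1) - log i = ∫ x in (i : ℝ)..(n + 1 : ℕ), x⁻¹ := by
        rw [integral_inv (Set.notMem_uIcc_of_lt hi' (by positivity)),
          log_div (by positivity) hi'.ne']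
        push_cast; rfl
    _ ≤ ∑ l ∈ Ico i (n + 1), (l : ℝ)⁻¹ :=
        (inv_antitoneOn_Icc_right hi').integral_le_sum_Ico hin
    _ = ∑ l ∈ Icc i n, (l : ℝ)⁻¹ := by rw [Ico_add_one_right_eq_Icc]

lemma tendsto_natCast_log_atTop : Tendsto (fun n : ℕ => log n) atTop atTop :=
  tendsto_log_atTop.comp tendsto_natCast_atTop_atTop

lemma eventually_log_div_two_le_sum_Icc_inv_le_two_mul_log {i : ℕ} (hi : 1 ≤ i) :
    ∀ᶠ n : ℕ in atTop, log n / 2 ≤ ∑ l ∈ Icc i n, (l : ℝ)⁻¹ ∧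
      ∑ l ∈ Icc i n, (l : ℝ)⁻¹ ≤ 2 * log n := by
  filter_upwards [eventually_ge_atTop i, tendsto_natCast_log_atTop.eventually_ge_atTop 1,
    tendsto_natCast_log_atTop.eventually_ge_atTop (2 * log i)] with n hin hlog_one hlog_i
  have hlog_succ : log n ≤ log (n + 1) :=
    log_le_log (by exact_mod_cast (hi.trans hin)) (by linarith)
  have hlower := log_add_one_sub_log_le_sum_Icc_inv hi (n := n) (by omega)
  have hupper := sum_Icc_inv_le_one_add_log hi n
  constructor <;> linarith

lemma eventually_mul_log_le_sum_Icc_le_mul_log {α β : ℝ} (hα : 0 ≤ α) {i : ℕ} (hi : 1 ≤ i)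
    {b : ℕ → ℝ} (hb : ∀ n, 1 ≤ n → α / n ≤ b n ∧ b n ≤ β / n) :
    ∀ᶠ n : ℕ in atTop, α / 2 * log n ≤ ∑ l ∈ Icc i n, b l ∧
      ∑ l ∈ Icc i n, b l ≤ 2 * β * log n := by
  have hβ : 0 ≤ β := by
    have h := hb 1 le_rfl
    simp only [Nat.cast_one, div_one] at h
    linarith [h.1, h.2]
  have hb_sum : ∀ n, α * ∑ l ∈ Icc i n, (l : ℝ)⁻¹ ≤ ∑ l ∈ Icc i n, b l ∧
      ∑ l ∈ Icc i n, b l ≤ β * ∑ l ∈ Icc i n, (l : ℝ)⁻¹ := fun n => by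
    simp only [mul_sum, ← div_eq_mul_inv]
    exact ⟨sum_le_sum fun l hl => (hb l (hi.trans (mem_Icc.1 hl).1)).1,
      sum_le_sum fun l hl => (hb l (hi.trans (mem_Icc.1 hl).1)).2⟩
  filter_upwards [eventually_log_div_two_le_sum_Icc_inv_le_two_mul_log hi] with n ⟨hlower, hupper⟩
  constructor
  · calc α / 2 * log n = α * (log n / 2) := by ring
      _ ≤ α * ∑ l ∈ Icc i n, (l : ℝ)⁻¹ := mul_le_mul_of_nonneg_left hlower hα
      _ ≤ ∑ l ∈ Icc i n, b l := (hb_sum n).1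
  · calc ∑ l ∈ Icc i n, b l ≤ β * ∑ l ∈ Icc i n, (l : ℝ)⁻¹ := (hb_sum n).2
      _ ≤ β * (2 * log n) := mul_le_mul_of_nonneg_left hupper hβ
      _ = 2 * β * log n := by ring

lemma tendsto_div_nhds_one_of_tendsto_sub {ι : Type*} {l : Filter ι} {f g : ι → ℝ} {a : ℝ}
    (hfg : Tendsto (fun x => f x - g x) l (𝓝 a)) (hg : Tendsto g l atTop) :
    Tendsto (fun x => f x / g x) l (𝓝 1) := by
  have h := (hfg.div_atTop hg).add_const 1
  rw [zero_add] at h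
  refine h.congr' ?_
  filter_upwards [hg.eventually_gt_atTop 0] with x hx
  rw [sub_div, div_self hx.ne', sub_add_cancel]

lemma tendsto_sub_div_sum_Icc {α β : ℝ} (hα : 0 < α) {i : ℕ} (hi : 1 ≤ i) {b τ : ℕ → ℝ}
    (hb : ∀ n, 1 ≤ n → α / n ≤ b n ∧ b n ≤ β / n) {L : ℝ}
    (hS : Tendsto (fun n => ∑ k ∈ range n, (τ (i + k + 1) - τ (i + k) - b (i + k))) atTop (𝓝 L)) :
    Tendsto (fun n => (τ n - τ i) / ∑ l ∈ Icc i n, b l) atTop (𝓝 1) := by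
  have hc : Tendsto (fun n => ∑ l ∈ Icc i n, b l) atTop atTop :=
    tendsto_atTop_mono' _
      ((eventually_mul_log_le_sum_Icc_le_mul_log hα.le hi hb).mono fun _ h => h.1)
      (tendsto_natCast_log_atTop.const_mul_atTop (by positivity))
  have hb0 : Tendsto b atTop (𝓝 0) :=
    tendsto_of_tendsto_of_tendsto_of_le_of_le' (tendsto_const_div_atTop_nhds_zero_nat α)
      (tendsto_const_div_atTop_nhds_zero_nat β)
      ((eventually_ge_atTop 1).mono fun n hn => (hb n hn).1)
      ((eventually_ge_atTop 1).mono fun n hn => (hb n hn).2)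
  have hsplit : ∀ n, τ (n + i) - τ i - ∑ l ∈ Icc i (n + i), b l =
      ∑ k ∈ range n, (τ (i + k + 1) - τ (i + k) - b (i + k)) - b (n + i) := fun n => by
    have htelescope := sum_range_sub (fun k => τ (i + k)) n
    simp only [← add_assoc, add_zero] at htelescope
    rw [sum_sub_distrib, htelescope, ← Ico_add_one_right_eq_Icc, sum_Ico_eq_sum_range,
      show n + i + 1 - i = n + 1 by omega, sum_range_succ, add_comm n i]
    ring
  refine tendsto_div_nhds_one_of_tendsto_sub (a := L - 0) ((tendsto_add_atTop_iff_nat i).1 ?_) hc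
  simp only [hsplit]
  exact hS.sub (hb0.comp (tendsto_add_atTop_nat i))

section

variable {Ω : Type*} {m0 : MeasurableSpace Ω} {μ : Measure Ω} [IsFiniteMeasure μ]

lemma integral_le_integral_of_condExp_le {m : MeasurableSpace Ω} (hm : m ≤ m0) {f g : Ω → ℝ}
    (hg : Integrable g μ) (hfg : μ[f | m] ≤ᵐ[μ] g) : ∫ ω, f ω ∂μ ≤ ∫ ω, g ω ∂μ :=
  (integral_condExp hm).symm.trans_le (integral_mono_ae integrable_condExp hg hfg)

lemma integral_mul_eq_zero_of_condExp_eq_zero {m : MeasurableSpace Ω} (hm : m ≤ m0)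
    {Y Z : Ω → ℝ} (hY : StronglyMeasurable[m] Y) (hYZ : Integrable (Y * Z) μ)
    (hZ : Integrable Z μ) (h : μ[Z | m] =ᵐ[μ] 0) : ∫ ω, Y ω * Z ω ∂μ = 0 := by
  have hprod : μ[Y * Z | m] =ᵐ[μ] 0 := by
    filter_upwards [condExp_mul_of_stronglyMeasurable_left hY hYZ hZ, h] with ω h₁ h₂
    simp [h₁, h₂]
  calc ∫ ω, Y ω * Z ω ∂μ = ∫ ω, (μ[Y * Z | m]) ω ∂μ := (integral_condExp hm).symm
    _ = 0 := by simp [integral_congr_ae hprod]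

lemma eLpNorm_one_le_of_memLp_two {Y : Ω → ℝ} (hY : MemLp Y 2 μ) :
    eLpNorm Y 1 μ ≤ ENNReal.ofReal ((∫ ω, Y ω ^ 2 ∂μ + μ.real Set.univ) / 2) := by
  have hY2 : Integrable (fun ω => Y ω ^ 2) μ := hY.integrable_sq
  rw [eLpNorm_one_eq_lintegral_enorm, ← ofReal_integral_norm_eq_lintegral_enorm
    (hY.integrable one_le_two)]
  refine ENNReal.ofReal_le_ofReal ?_
  calc ∫ ω, ‖Y ω‖ ∂μ ≤ ∫ ω, (Y ω ^ 2 + 1) / 2 ∂μ :=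
        integral_mono (hY.integrable one_le_two).norm
          ((hY2.add (integrable_const 1)).div_const 2) fun ω => by
          nlinarith [sq_nonneg (|Y ω| - 1), sq_abs (Y ω), Real.norm_eq_abs (Y ω)]
    _ = (∫ ω, Y ω ^ 2 ∂μ + μ.real Set.univ) / 2 := by
        rw [integral_div, integral_add hY2 (integrable_const 1)]; simp

section MartingaleDifference

variable {ℱ : Filtration ℕ m0} {X : ℕ → Ω → ℝ}

lemma stronglyMeasurable_sum_range (hX : ∀ n, StronglyMeasurable[ℱ (n + 1)] (X n)) (n : ℕ) :
    StronglyMeasurable[ℱ n] fun ω => ∑ k ∈ range n, X k ω :=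
  Finset.stronglyMeasurable_fun_sum _ fun k hk =>
    (hX k).mono (ℱ.mono (Nat.succ_le_of_lt (mem_range.1 hk)))

lemma martingale_sum_range_of_condExp_eq_zero (hX : ∀ n, StronglyMeasurable[ℱ (n + 1)] (X n))
    (hint : ∀ n, Integrable (X n) μ) (hmds : ∀ n, μ[X n | ℱ n] =ᵐ[μ] 0) :
    Martingale (fun n ω => ∑ k ∈ range n, X k ω) ℱ μ :=
  martingale_of_condExp_sub_eq_zero_nat (stronglyMeasurable_sum_range hX)
    (fun n => integrable_finsetSum _ fun k _ => hint k) fun n => by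
      convert hmds n using 2
      ext ω
      simp [sum_range_succ]

lemma integral_sq_sum_range_of_condExp_eq_zero (hX : ∀ n, StronglyMeasurable[ℱ (n + 1)] (X n))
    (hL2 : ∀ n, MemLp (X n) 2 μ) (hmds : ∀ n, μ[X n | ℱ n] =ᵐ[μ] 0) (n : ℕ) :
    ∫ ω, (∑ k ∈ range n, X k ω) ^ 2 ∂μ = ∑ k ∈ range n, ∫ ω, X k ω ^ 2 ∂μ := by
  induction n with
  | zero => simp
  | succ n ih =>
    set S := fun ω => ∑ k ∈ range n, X k ω with hS_def
    have hS : MemLp S 2 μ := memLp_finsetSum _ fun k _ => hL2 k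
    have hSX : Integrable (S * X n) μ := hS.integrable_mul (hL2 n)
    have hcross : ∫ ω, S ω * X n ω ∂μ = 0 :=
      integral_mul_eq_zero_of_condExp_eq_zero (ℱ.le n) (stronglyMeasurable_sum_range hX n) hSX
        ((hL2 n).integrable one_le_two) (hmds n)
    have hexpand : (fun ω => (∑ k ∈ range (n + 1), X k ω) ^ 2)
        = fun ω => S ω ^ 2 + 2 * (S ω * X n ω) + X n ω ^ 2 := by
      funext ω; simp only [sum_range_succ, hS_def]; ring
    have hcross_int : Integrable (fun ω => 2 * (S ω * X n ω)) μ := hSX.const_mul 2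
    have hfirst_int : Integrable (fun ω => S ω ^ 2 + 2 * (S ω * X n ω)) μ :=
      hS.integrable_sq.add hcross_int
    rw [hexpand, sum_range_succ, integral_add hfirst_int (hL2 n).integrable_sq,
      integral_add hS.integrable_sq hcross_int, integral_const_mul, hcross, ih]
    ring

lemma ae_exists_tendsto_sum_range_of_condExp_eq_zero
    (hX : ∀ n, StronglyMeasurable[ℱ (n + 1)] (X n))
    (hL2 : ∀ n, MemLp (X n) 2 μ) (hmds : ∀ n, μ[X n | ℱ n] =ᵐ[μ] 0)
    (hvar : Summable fun n => ∫ ω, X n ω ^ 2 ∂μ) :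
    ∀ᵐ ω ∂μ, ∃ L, Tendsto (fun n => ∑ k ∈ range n, X k ω) atTop (𝓝 L) := by
  refine (martingale_sum_range_of_condExp_eq_zero hX (fun n => (hL2 n).integrable one_le_two)
    hmds).submartingale.exists_ae_tendsto_of_bdd
    (R := ((∑' n, ∫ ω, X n ω ^ 2 ∂μ + μ.real Set.univ) / 2).toNNReal) fun n => ?_
  refine (eLpNorm_one_le_of_memLp_two (memLp_finsetSum _ fun k _ => hL2 k)).trans ?_
  rw [integral_sq_sum_range_of_condExp_eq_zero hX hL2 hmds]
  refine ENNReal.ofReal_le_ofReal ?_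
  gcongr
  exact hvar.sum_le_tsum _ fun k _ => integral_nonneg fun ω => sq_nonneg _

end MartingaleDifference

lemma ae_exists_tendsto_sum_jump_fluctuations {β : ℝ} {i : ℕ} (hi : 1 ≤ i)
    {b τ : ℕ → Ω → ℝ} {ℱ : ℕ → MeasurableSpace Ω}
    (hℱ : ∀ n, ℱ n ≤ m0) (hℱmono : ∀ n, ℱ n ≤ ℱ (n + 1))
    (hτmeas : ∀ n, Measurable[ℱ n] (τ n)) (hbmeas : ∀ n, Measurable[ℱ n] (b n))
    (hb : ∀ n, 1 ≤ n → ∀ᵐ ω ∂μ, ‖b n ω‖ ≤ β / n)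
    (hL2 : ∀ n, MemLp (fun ω => τ (n + 1) ω - τ n ω) 2 μ)
    (hmds : ∀ n, i ≤ n → μ[fun ω => τ (n + 1) ω - τ n ω - b n ω | ℱ n] =ᵐ[μ] 0)
    (hcondvar : ∀ n, i ≤ n →
      ∀ᵐ ω ∂μ, (μ[fun ω' => (τ (n + 1) ω' - τ n ω' - b n ω') ^ 2 | ℱ n]) ω ≤ b n ω ^ 2) :
    ∀ᵐ ω ∂μ, ∃ L, Tendsto
      (fun n => ∑ k ∈ range n, (τ (i + k + 1) ω - τ (i + k) ω - b (i + k) ω)) atTop (𝓝 L) := by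
  have hℱ_monotone : Monotone ℱ := monotone_nat_of_le_succ hℱmono
  let 𝒢 : Filtration ℕ m0 :=
    ⟨fun k => ℱ (i + k), fun _ _ h => hℱ_monotone (Nat.add_le_add_left h i), fun _ => hℱ _⟩
  have hbL2 : ∀ n, 1 ≤ n → MemLp (b n) 2 μ := fun n hn =>
    .of_bound ((hbmeas n).mono (hℱ n) le_rfl).aestronglyMeasurable _ (hb n hn)
  have hsq : ∀ k, ∫ ω, (τ (i + k + 1) ω - τ (i + k) ω - b (i + k) ω) ^ 2 ∂μ
      ≤ β ^ 2 * μ.real Set.univ * (((k + i : ℕ) : ℝ) ^ 2)⁻¹ := fun k => by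
    have hn : 1 ≤ i + k := hi.trans (Nat.le_add_right i k)
    calc _ ≤ ∫ ω, b (i + k) ω ^ 2 ∂μ :=
          integral_le_integral_of_condExp_le (hℱ _) (hbL2 _ hn).integrable_sq
            (hcondvar _ (Nat.le_add_right i k))
      _ ≤ (β / (i + k : ℕ)) ^ 2 * μ.real Set.univ :=
          (Real.le_norm_self _).trans <| norm_integral_le_of_norm_le_const <|
            (hb _ hn).mono fun ω h => by
              rw [norm_pow]; exact pow_le_pow_left₀ (norm_nonneg _) h 2
      _ = _ := by rw [add_comm k i]; ring
  refine ae_exists_tendsto_sum_range_of_condExp_eq_zero (ℱ := 𝒢)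
    (fun k => (((hτmeas _).sub ((hτmeas _).mono (hℱmono _) le_rfl)).sub
      ((hbmeas _).mono (hℱmono _) le_rfl)).stronglyMeasurable)
    (fun k => (hL2 _).sub (hbL2 _ (hi.trans (Nat.le_add_right i k))))
    (fun k => hmds _ (Nat.le_add_right i k)) ?_
  refine .of_nonneg_of_le (fun k => integral_nonneg fun ω => sq_nonneg _) hsq ?_
  exact ((summable_nat_add_iff i).2 (Real.summable_nat_pow_inv.2 one_lt_two)).mul_left _

end

theorem embedding_jump_times_asymptotics_general
    {Ω : Type*} [MeasurableSpace Ω] (μ : Measure Ω) [IsProbabilityMeasure μ]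
    (m i : ℕ) (hm : 1 ≤ m) (hi : 2 ≤ i)
    (b τ : ℕ → Ω → ℝ) (ℱ : ℕ → MeasurableSpace Ω)
    (hℱ : ∀ n, ℱ n ≤ (inferInstance : MeasurableSpace Ω))
    (hℱmono : ∀ n, ℱ n ≤ ℱ (n + 1))
    (hτmeas : ∀ n, @Measurable Ω ℝ (ℱ n) _ (τ n))
    (hbmeas : ∀ n, @Measurable Ω ℝ (ℱ n) _ (b n))
    (hbound : ∀ n : ℕ, 1 ≤ n → ∀ᵐ ω ∂μ,
      (m : ℝ) ^ 2 / (n : ℝ) ≤ b n ω ∧ b n ω ≤ 2 * (m : ℝ) ^ 2 / (n : ℝ))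
    (hL2 : ∀ n, MemLp (fun ω => τ (n + 1) ω - τ n ω) 2 μ)
    (hmds : ∀ n : ℕ, i ≤ n →
      μ[(fun ω => τ (n + 1) ω - τ n ω - b n ω) | ℱ n] =ᵐ[μ] fun _ => (0 : ℝ))
    (hcondvar : ∀ n : ℕ, i ≤ n →
      ∀ᵐ ω ∂μ, (μ[(fun ω' => (τ (n + 1) ω' - τ n ω' - b n ω') ^ 2) | ℱ n]) ω ≤ (b n ω) ^ 2) :
    (∀ᵐ ω ∂μ,
      Filter.Tendsto
        (fun n : ℕ => (τ n ω - τ i ω) / ∑ l ∈ Finset.Icc i n, b l ω)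
        Filter.atTop (nhds 1)) ∧
    ∃ c C : ℝ, 0 < c ∧ 0 < C ∧ ∀ᵐ ω ∂μ, ∀ᶠ n : ℕ in Filter.atTop,
      c * (m : ℝ) ^ 2 * Real.log n ≤ (∑ l ∈ Finset.Icc i n, b l ω) ∧
      (∑ l ∈ Finset.Icc i n, b l ω) ≤ C * (m : ℝ) ^ 2 * Real.log n := by
  have hi₁ : 1 ≤ i := by omega
  have hm₂ : (0 : ℝ) < (m : ℝ) ^ 2 := pow_pos (Nat.cast_pos.2 hm) 2
  have hb : ∀ᵐ ω ∂μ, ∀ n, 1 ≤ n → (m : ℝ) ^ 2 / n ≤ b n ω ∧ b n ω ≤ 2 * (m : ℝ) ^ 2 / n :=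
    ae_all_iff.2 fun n => eventually_imp_distrib_left.2 (hbound n)
  have hb_norm : ∀ n, 1 ≤ n → ∀ᵐ ω ∂μ, ‖b n ω‖ ≤ 2 * (m : ℝ) ^ 2 / n := fun n hn =>
    (hbound n hn).mono fun ω h => by
      rw [Real.norm_eq_abs, abs_le]
      exact ⟨by linarith [h.1, div_nonneg hm₂.le n.cast_nonneg], h.2⟩
  have hS := ae_exists_tendsto_sum_jump_fluctuations hi₁ hℱ hℱmono hτmeas hbmeas hb_norm hL2
    hmds hcondvar
  refine ⟨?_, 1 / 2, 4, by norm_num, by norm_num, ?_⟩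
  · filter_upwards [hb, hS] with ω hbω ⟨L, hL⟩
    exact tendsto_sub_div_sum_Icc hm₂ hi₁ hbω hL
  · filter_upwards [hb] with ω hbω
    filter_upwards [eventually_mul_log_le_sum_Icc_le_mul_log hm₂.le hi₁ hbω] with n h
    constructor <;> linarith [h.1, h.2]

/-- Let `b_n` be a sequence of random variables with `m²/n ≤ b_n ≤ 2m²/n` almost surely,
and suppose `(τ_{n+1} - τ_n - b_n)` is a martingale difference sequence (with conditional
second moments bounded by `b_n²`, as the increments are conditionally exponential) with
`∑_n b_n² < ∞` a.s.  Then with `c_n = ∑_{l=i}^n b_l` we have `(τ_n - τ_i)/c_n → 1` almost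
surely, and `c_n = Θ(m² log n)`. -/
theorem embedding_jump_times_asymptotics
    {Ω : Type*} [MeasurableSpace Ω] (μ : Measure Ω) [IsProbabilityMeasure μ]
    (m i : ℕ) (hm : 1 ≤ m) (hi : 2 ≤ i)
    (b τ : ℕ → Ω → ℝ) (ℱ : ℕ → MeasurableSpace Ω)
    (hℱ : ∀ n, ℱ n ≤ (inferInstance : MeasurableSpace Ω))
    (hℱmono : ∀ n, ℱ n ≤ ℱ (n + 1))
    (hτmeas : ∀ n, @Measurable Ω ℝ (ℱ n) _ (τ n))
    (hbmeas : ∀ n, @Measurable Ω ℝ (ℱ n) _ (b n))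
    (hbound : ∀ n : ℕ, 1 ≤ n → ∀ᵐ ω ∂μ,
      (m : ℝ) ^ 2 / (n : ℝ) ≤ b n ω ∧ b n ω ≤ 2 * (m : ℝ) ^ 2 / (n : ℝ))
    (hL2 : ∀ n, MemLp (fun ω => τ (n + 1) ω - τ n ω) 2 μ)
    (hmds : ∀ n : ℕ, i ≤ n →
      μ[(fun ω => τ (n + 1) ω - τ n ω - b n ω) | ℱ n] =ᵐ[μ] fun _ => (0 : ℝ))
    (hcondvar : ∀ n : ℕ, i ≤ n →
      ∀ᵐ ω ∂μ, (μ[(fun ω' => (τ (n + 1) ω' - τ n ω' - b n ω') ^ 2) | ℱ n]) ω ≤ (b n ω) ^ 2)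
    (hsq : ∀ᵐ ω ∂μ, Summable (fun n : ℕ => (b n ω) ^ 2)) :
    (∀ᵐ ω ∂μ,
      Filter.Tendsto
        (fun n : ℕ => (τ n ω - τ i ω) / ∑ l ∈ Finset.Icc i n, b l ω)
        Filter.atTop (nhds 1)) ∧
    ∃ c C : ℝ, 0 < c ∧ 0 < C ∧ ∀ᵐ ω ∂μ, ∀ᶠ n : ℕ in Filter.atTop,
      c * (m : ℝ) ^ 2 * Real.log n ≤ (∑ l ∈ Finset.Icc i n, b l ω) ∧
      (∑ l ∈ Finset.Icc i n, b l ω) ≤ C * (m : ℝ) ^ 2 * Real.log n :=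
  embedding_jump_times_asymptotics_general μ m i hm hi b τ ℱ hℱ hℱmono hτmeas hbmeas hbound hL2 hmds
    hcondvar
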